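/- arXiv:1910.00318 — 5 statements merged into one kernel-verified Lean document; each statement's English description precedes it below -/
import Mathlib

section
/- Fix a unit vector n ∈ ℝ³ and constants b, c, s > 0. Define the linear operator H_n on symmetric traceless 3×3 matrices by H_n(Q) = bs(Q - (nn·Q + Q·nn) + (2/3)(Q:nn)I) + 2cs²(Q:nn)(nn - I/3), where nn = n⊗n and Q:nn = Σᵢⱼ Qᵢⱼnᵢnⱼ. Then for every vector m ∈ ℝ³ with m·n = 0, we have H_n(n⊗m + m⊗n) = 0. -/
open Matrix

noncomputable def frob (A B : Matrix (Fin 3) (Fin 3) ℝ) : ℝ := ∑ i, ∑ j, A i j * B i j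

noncomputable def Hn (b c s : ℝ) (n : Fin 3 → ℝ) (Q : Matrix (Fin 3) (Fin 3) ℝ) :
    Matrix (Fin 3) (Fin 3) ℝ :=
  (b * s) • (Q - (vecMulVec n n * Q + Q * vecMulVec n n)
      + (2 / 3 * frob Q (vecMulVec n n)) • (1 : Matrix (Fin 3) (Fin 3) ℝ))
  + (2 * c * s ^ 2 * frob Q (vecMulVec n n)) •
      (vecMulVec n n - (1 / 3 : ℝ) • (1 : Matrix (Fin 3) (Fin 3) ℝ))

lemma vmv_mul_vmv (a b c d : Fin 3 → ℝ) :
    vecMulVec a b * vecMulVec c d = (b ⬝ᵥ c) • vecMulVec a d := by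
  ext i j
  simp only [Matrix.mul_apply, vecMulVec_apply, Matrix.smul_apply, dotProduct, smul_eq_mul]
  rw [Finset.sum_mul]
  exact Finset.sum_congr rfl fun k _ => by ring

lemma frob_vmv_vmv (a b c d : Fin 3 → ℝ) :
    frob (vecMulVec a b) (vecMulVec c d) = (a ⬝ᵥ c) * (b ⬝ᵥ d) := by
  rw [dotProduct, dotProduct, Finset.sum_mul_sum]
  simp only [frob, vecMulVec_apply]
  exact Finset.sum_congr rfl fun i _ => Finset.sum_congr rfl fun j _ => by ring

lemma frob_add_left (A B C : Matrix (Fin 3) (Fin 3) ℝ) :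
    frob (A + B) C = frob A C + frob B C := by
  simp [frob, add_mul, Finset.sum_add_distrib]

theorem kernel_of_linearized_operator
    (b c s : ℝ) (hb : 0 < b) (hc : 0 < c) (hs : 0 < s)
    (n : Fin 3 → ℝ) (hn : n ⬝ᵥ n = 1)
    (m : Fin 3 → ℝ) (hm : m ⬝ᵥ n = 0) :
    Hn b c s n (vecMulVec n m + vecMulVec m n) = 0 := by
  have hnm : n ⬝ᵥ m = 0 := by rwa [dotProduct_comm]
  have hF : frob (vecMulVec n m + vecMulVec m n) (vecMulVec n n) = 0 := by
    rw [frob_add_left, frob_vmv_vmv, frob_vmv_vmv, hn, hm]; norm_num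
  have h1 : vecMulVec n n * (vecMulVec n m + vecMulVec m n)
      + (vecMulVec n m + vecMulVec m n) * vecMulVec n n
      = vecMulVec n m + vecMulVec m n := by
    rw [mul_add, add_mul, vmv_mul_vmv, vmv_mul_vmv, vmv_mul_vmv, vmv_mul_vmv,
      hn, hm, hnm]
    simp
  rw [Hn, hF, h1]
  simp
end

section
/- Let n ∈ ℝ³ be a unit vector and Q a symmetric traceless 3×3 matrix. Then for any vector m ∈ ℝ³ with m·n = 0, the identity |Q - (n⊗m + m⊗n)|² = |Q|² - 2|Q·n|² + 2(Q:nn)² + 2|m - (I - nn)·Q·n|² holds, where |A|² = Σᵢⱼ Aᵢⱼ² and |v|² is the Euclidean norm squared of a vector v. -/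
open Matrix

theorem distance_to_kernel_identity
    (n : Fin 3 → ℝ) (hn : n ⬝ᵥ n = 1)
    (Q : Matrix (Fin 3) (Fin 3) ℝ) (hsym : Qᵀ = Q) (htr : Q.trace = 0)
    (m : Fin 3 → ℝ) (hm : m ⬝ᵥ n = 0) :
    frob (Q - (vecMulVec n m + vecMulVec m n)) (Q - (vecMulVec n m + vecMulVec m n))
      = frob Q Q - 2 * ((Q *ᵥ n) ⬝ᵥ (Q *ᵥ n)) + 2 * (frob Q (vecMulVec n n)) ^ 2
        + 2 * ((m - ((1 - vecMulVec n n) * Q) *ᵥ n) ⬝ᵥ (m - ((1 - vecMulVec n n) * Q) *ᵥ n)) := by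
  have h01 := congrFun (congrFun hsym 1) 0
  have h02 := congrFun (congrFun hsym 2) 0
  have h12 := congrFun (congrFun hsym 2) 1
  rw [transpose_apply] at h01 h02 h12
  simp only [dotProduct, Fin.sum_univ_three] at hn hm
  rw [sub_mul, one_mul]
  simp only [frob, Fin.sum_univ_three, dotProduct, mulVec, Matrix.sub_apply,
    Matrix.add_apply, vecMulVec_apply, Matrix.mul_apply, Pi.sub_apply]
  linear_combination
    (2 * (m 0 * n 1 - m 1 * n 0)) * h01
    + (2 * (m 0 * n 2 - m 2 * n 0)) * h02
    + (2 * (m 1 * n 2 - m 2 * n 1)) * h12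
    + (2 * (m 0 ^ 2 + m 1 ^ 2 + m 2 ^ 2)
       - 2 * (n 0 * Q 0 0 * n 0 + n 0 * Q 0 1 * n 1 + n 0 * Q 0 2 * n 2
         + n 1 * Q 1 0 * n 0 + n 1 * Q 1 1 * n 1 + n 1 * Q 1 2 * n 2
         + n 2 * Q 2 0 * n 0 + n 2 * Q 2 1 * n 1 + n 2 * Q 2 2 * n 2) ^ 2) * hn
    + (2 * (m 0 * n 0 + m 1 * n 1 + m 2 * n 2)
       - 4 * (n 0 * Q 0 0 * n 0 + n 0 * Q 0 1 * n 1 + n 0 * Q 0 2 * n 2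
         + n 1 * Q 1 0 * n 0 + n 1 * Q 1 1 * n 1 + n 1 * Q 1 2 * n 2
         + n 2 * Q 2 0 * n 0 + n 2 * Q 2 1 * n 1 + n 2 * Q 2 2 * n 2)) * hm
end

section
/- Fix a unit vector n ∈ ℝ³ and constants b, c, s > 0 with 4cs > b. Let H_n(Q) = bs(Q - (nn·Q + Q·nn) + (2/3)(Q:nn)I) + 2cs²(Q:nn)(nn - I/3) on symmetric traceless matrices, and define M(Q) = (1/(bs))(Q - (nn·Q + Q·nn) + (2/3)(Q:nn)I) + ((4b + 2cs)/(bs(4cs - b)))(Q:nn)(nn - I/3). Then for every symmetric traceless Q satisfying Q:(n⊗m + m⊗n) = 0 for all m ⊥ n (i.e., Q orthogonal to the kernel of H_n), we have M(H_n(Q)) = Q. -/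
open Matrix

noncomputable def HnInv (b c s : ℝ) (n : Fin 3 → ℝ) (Q : Matrix (Fin 3) (Fin 3) ℝ) :
    Matrix (Fin 3) (Fin 3) ℝ :=
  (1 / (b * s)) • (Q - (vecMulVec n n * Q + Q * vecMulVec n n)
      + (2 / 3 * frob Q (vecMulVec n n)) • (1 : Matrix (Fin 3) (Fin 3) ℝ))
  + ((4 * b + 2 * c * s) / (b * s * (4 * c * s - b)) * frob Q (vecMulVec n n)) •
      (vecMulVec n n - (1 / 3 : ℝ) • (1 : Matrix (Fin 3) (Fin 3) ℝ))

lemma frob_vecMulVec (A : Matrix (Fin 3) (Fin 3) ℝ) (u v : Fin 3 → ℝ) :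
    frob A (vecMulVec u v) = u ⬝ᵥ (A *ᵥ v) := by
  simp only [frob, vecMulVec_apply, dotProduct, mulVec, Finset.mul_sum]
  exact Finset.sum_congr rfl fun i _ => Finset.sum_congr rfl fun j _ => by ring

lemma frob_add_right (A B C : Matrix (Fin 3) (Fin 3) ℝ) :
    frob A (B + C) = frob A B + frob A C := by
  simp only [frob, Matrix.add_apply, mul_add, Finset.sum_add_distrib]

lemma frob_vecMulVec_add_vecMulVec_of_transpose_eq {Q : Matrix (Fin 3) (Fin 3) ℝ} (hQ : Qᵀ = Q)
    (n m : Fin 3 → ℝ) : frob Q (vecMulVec n m + vecMulVec m n) = 2 * ((Q *ᵥ n) ⬝ᵥ m) := by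
  rw [frob_add_right, frob_vecMulVec, frob_vecMulVec, dotProduct_mulVec, ← mulVec_transpose, hQ,
    dotProduct_comm m]
  ring

lemma eq_dotProduct_smul_of_forall_dotProduct_eq_zero {ι R : Type*} [Fintype ι] [CommRing R]
    [LinearOrder R] [IsStrictOrderedRing R] {n w : ι → R} (hn : n ⬝ᵥ n = 1)
    (hw : ∀ m, m ⬝ᵥ n = 0 → w ⬝ᵥ m = 0) : w = (w ⬝ᵥ n) • n := by
  set v := w - (w ⬝ᵥ n) • n
  have hvn : v ⬝ᵥ n = 0 := by simp [v, sub_dotProduct, hn]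
  have hvv : v ⬝ᵥ v = 0 :=
    calc v ⬝ᵥ v = w ⬝ᵥ v - (w ⬝ᵥ n) * (v ⬝ᵥ n) := by
          rw [sub_dotProduct, smul_dotProduct, dotProduct_comm n, smul_eq_mul]
      _ = 0 := by rw [hw v hvn, hvn]; ring
  exact sub_eq_zero.1 (dotProduct_self_eq_zero.1 hvv)

lemma mulVec_eq_frob_smul_of_forall_frob_eq_zero {n : Fin 3 → ℝ} (hn : n ⬝ᵥ n = 1)
    {Q : Matrix (Fin 3) (Fin 3) ℝ} (hQ : Qᵀ = Q)
    (horth : ∀ m, m ⬝ᵥ n = 0 → frob Q (vecMulVec n m + vecMulVec m n) = 0) :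
    Q *ᵥ n = frob Q (vecMulVec n n) • n := by
  rw [frob_vecMulVec, dotProduct_comm]
  refine eq_dotProduct_smul_of_forall_dotProduct_eq_zero hn fun m hm => ?_
  have := horth m hm
  rw [frob_vecMulVec_add_vecMulVec_of_transpose_eq hQ] at this
  linarith

noncomputable def linearizedOp (α β : ℝ) (n : Fin 3 → ℝ) (Q : Matrix (Fin 3) (Fin 3) ℝ) :
    Matrix (Fin 3) (Fin 3) ℝ :=
  α • (Q - (vecMulVec n n * Q + Q * vecMulVec n n)
      + (2 / 3 * frob Q (vecMulVec n n)) • (1 : Matrix (Fin 3) (Fin 3) ℝ))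
  + (β * frob Q (vecMulVec n n)) •
      (vecMulVec n n - (1 / 3 : ℝ) • (1 : Matrix (Fin 3) (Fin 3) ℝ))

noncomputable def axialOp (α γ : ℝ) (n : Fin 3 → ℝ) (Q : Matrix (Fin 3) (Fin 3) ℝ) :
    Matrix (Fin 3) (Fin 3) ℝ :=
  α • Q + (γ * frob Q (vecMulVec n n)) •
    (vecMulVec n n - (1 / 3 : ℝ) • (1 : Matrix (Fin 3) (Fin 3) ℝ))

lemma Hn_eq_linearizedOp (b c s : ℝ) (n : Fin 3 → ℝ) :
    Hn b c s n = linearizedOp (b * s) (2 * c * s ^ 2) n := rfl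

lemma HnInv_eq_linearizedOp (b c s : ℝ) (n : Fin 3 → ℝ) :
    HnInv b c s n =
      linearizedOp (1 / (b * s)) ((4 * b + 2 * c * s) / (b * s * (4 * c * s - b))) n :=
  rfl

lemma axialOp_one_zero (n : Fin 3 → ℝ) (Q : Matrix (Fin 3) (Fin 3) ℝ) : axialOp 1 0 n Q = Q := by
  simp [axialOp]

section Eigenvector

variable {n : Fin 3 → ℝ} {Q : Matrix (Fin 3) (Fin 3) ℝ} {μ : ℝ}

lemma frob_vecMulVec_self_of_mulVec_eq (hn : n ⬝ᵥ n = 1) (hQn : Q *ᵥ n = μ • n) :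
    frob Q (vecMulVec n n) = μ := by
  rw [frob_vecMulVec, hQn, dotProduct_smul, hn, smul_eq_mul, mul_one]

lemma linearizedOp_eq_axialOp (hn : n ⬝ᵥ n = 1) (hQn : Q *ᵥ n = μ • n) (hnQ : n ᵥ* Q = μ • n)
    (α β : ℝ) : linearizedOp α β n Q = axialOp α (β - 2 * α) n Q := by
  have hq := frob_vecMulVec_self_of_mulVec_eq hn hQn
  rw [linearizedOp, axialOp, vecMulVec_mul, mul_vecMulVec, hnQ, hQn, hq, vecMulVec_smul,
    smul_vecMulVec]
  module

lemma mulVec_axialOp (hn : n ⬝ᵥ n = 1) (hQn : Q *ᵥ n = μ • n) (α γ : ℝ) :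
    axialOp α γ n Q *ᵥ n = ((α + 2 / 3 * γ) * μ) • n := by
  rw [axialOp, frob_vecMulVec_self_of_mulVec_eq hn hQn, add_mulVec, smul_mulVec, smul_mulVec,
    sub_mulVec, vecMulVec_mulVec, smul_mulVec, one_mulVec, hQn, hn]
  simp only [op_smul_eq_smul]
  module

lemma vecMul_axialOp (hn : n ⬝ᵥ n = 1) (hQn : Q *ᵥ n = μ • n) (hnQ : n ᵥ* Q = μ • n)
    (α γ : ℝ) : n ᵥ* axialOp α γ n Q = ((α + 2 / 3 * γ) * μ) • n := by
  rw [axialOp, frob_vecMulVec_self_of_mulVec_eq hn hQn, vecMul_add, vecMul_smul, vecMul_smul,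
    vecMul_sub, vecMul_vecMulVec, vecMul_smul, vecMul_one, hnQ, hn]
  module

lemma axialOp_axialOp (hn : n ⬝ᵥ n = 1) (hQn : Q *ᵥ n = μ • n) (α γ α' γ' : ℝ) :
    axialOp α' γ' n (axialOp α γ n Q) = axialOp (α' * α) (α' * γ + γ' * (α + 2 / 3 * γ)) n Q := by
  have hq := frob_vecMulVec_self_of_mulVec_eq hn hQn
  have hq' := frob_vecMulVec_self_of_mulVec_eq hn (mulVec_axialOp hn hQn α γ)
  rw [axialOp, hq', axialOp, axialOp, hq]
  module

end Eigenvector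

theorem inverse_of_linearized_operator_general
    (b c s : ℝ) (hb : 0 < b) (hs : 0 < s) (hbc : b < 4 * c * s)
    (n : Fin 3 → ℝ) (hn : n ⬝ᵥ n = 1)
    (Q : Matrix (Fin 3) (Fin 3) ℝ) (hsym : Qᵀ = Q)
    (horth : ∀ m : Fin 3 → ℝ, m ⬝ᵥ n = 0 →
      frob Q (vecMulVec n m + vecMulVec m n) = 0) :
    HnInv b c s n (Hn b c s n Q) = Q := by
  have hQn := mulVec_eq_frob_smul_of_forall_frob_eq_zero hn hsym horth
  have hnQ : n ᵥ* Q = frob Q (vecMulVec n n) • n := by rw [← mulVec_transpose, hsym, hQn]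
  rw [HnInv_eq_linearizedOp, Hn_eq_linearizedOp, linearizedOp_eq_axialOp hn hQn hnQ,
    linearizedOp_eq_axialOp hn (mulVec_axialOp hn hQn _ _) (vecMul_axialOp hn hQn hnQ _ _),
    axialOp_axialOp hn hQn]
  have hbs : b * s ≠ 0 := by positivity
  -- `field_simp` rewrites the denominator `4 * c * s - b` into this form
  have hden : s * c * 4 - b ≠ 0 := by linarith
  convert axialOp_one_zero n Q using 2
  · field_simp
  · field_simp
    ring

theorem inverse_of_linearized_operator
    (b c s : ℝ) (hb : 0 < b) (hc : 0 < c) (hs : 0 < s) (hbc : b < 4 * c * s)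
    (n : Fin 3 → ℝ) (hn : n ⬝ᵥ n = 1)
    (Q : Matrix (Fin 3) (Fin 3) ℝ) (hsym : Qᵀ = Q) (htr : Q.trace = 0)
    (horth : ∀ m : Fin 3 → ℝ, m ⬝ᵥ n = 0 →
      frob Q (vecMulVec n m + vecMulVec m n) = 0) :
    HnInv b c s n (Hn b c s n Q) = Q :=
  inverse_of_linearized_operator_general b c s hb hs hbc n hn Q hsym horth
end

section
/- For every unit vector n ∈ ℝ³, every symmetric traceless 3×3 matrix Q, and the operator H_n(Q) = bs(Q - (nn·Q + Q·nn) + (2/3)(Q:nn)I) + 2cs²(Q:nn)(nn - I/3) with b,c,s real constants, the matrix H_n(Q) is Frobenius-orthogonal to every matrix of the form n⊗m + m⊗n with m·n = 0. -/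
open Matrix
theorem range_orthogonal_to_kernel
    (b c s : ℝ) (n : Fin 3 → ℝ) (hn : n ⬝ᵥ n = 1)
    (Q : Matrix (Fin 3) (Fin 3) ℝ) (hsym : Qᵀ = Q) (htr : Q.trace = 0)
    (m : Fin 3 → ℝ) (hm : m ⬝ᵥ n = 0) :
    frob (Hn b c s n Q) (vecMulVec n m + vecMulVec m n) = 0 := by
  simp only [dotProduct, Fin.sum_univ_three] at hn hm
  simp only [frob, Hn, Matrix.add_apply, Matrix.sub_apply, Matrix.smul_apply,
    Matrix.mul_apply, vecMulVec_apply, Matrix.one_apply, Fin.sum_univ_three,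
    smul_eq_mul, Fin.reduceEq, reduceIte, mul_one, mul_zero, zero_mul, one_mul]
  norm_num
  linear_combination
    (-(b * s) * ((n 0 * (Q 0 0 * m 0 + Q 0 1 * m 1 + Q 0 2 * m 2)
        + n 1 * (Q 1 0 * m 0 + Q 1 1 * m 1 + Q 1 2 * m 2)
        + n 2 * (Q 2 0 * m 0 + Q 2 1 * m 1 + Q 2 2 * m 2))
      + (m 0 * (Q 0 0 * n 0 + Q 0 1 * n 1 + Q 0 2 * n 2)
        + m 1 * (Q 1 0 * n 0 + Q 1 1 * n 1 + Q 1 2 * n 2)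
        + m 2 * (Q 2 0 * n 0 + Q 2 1 * n 1 + Q 2 2 * n 2)))) * hn
    + ((-(2/3) * b * s + 4 * c * s ^ 2 * (n 0 * n 0 + n 1 * n 1 + n 2 * n 2)
        - (4/3) * c * s ^ 2)
      * (n 0 * (Q 0 0 * n 0 + Q 0 1 * n 1 + Q 0 2 * n 2)
        + n 1 * (Q 1 0 * n 0 + Q 1 1 * n 1 + Q 1 2 * n 2)
        + n 2 * (Q 2 0 * n 0 + Q 2 1 * n 1 + Q 2 2 * n 2))) * hm
end

section
/- Let β̂₁, β̂₂, β̂₃ ∈ ℝ. Then the inequality β̂₁(nn:D)² + β̂₂|D|² + β̂₃|D·n|² ≥ 0 holds for every symmetric traceless 3×3 matrix D and every unit vector n ∈ ℝ³ if and only if β̂₂ ≥ 0, 2β̂₂ + β̂₃ ≥ 0, and (3/2)β̂₂ + β̂₃ + β̂₁ ≥ 0. -/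
/-!
Write `a = nn:D` and `v = D·n`. The dissipation equals
`β₂ (|D|² - 2|v|² + a²/2) + (2β₂ + β₃) (|v|² - a²) + (3/2 β₂ + β₃ + β₁) a²`.
The middle bracket is nonnegative by Cauchy–Schwarz. The first one is `|E|²` for
`E = P D P + (a/2) P` with `P = I - n nᵀ`: the block of `D` on the plane `n⊥` has trace `-a`,
and `E` is its traceless part. Hence the three conditions suffice. Conversely, with `n = e₃`,
the matrices `e₁e₂ᵀ + e₂e₁ᵀ`, `e₁e₃ᵀ + e₃e₁ᵀ` and `diag(-1/2, -1/2, 1)` each make all but one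
of the three brackets vanish.
-/

open Matrix

lemma dotProduct_sq_le_mul {ι R : Type*} [Fintype ι] [CommRing R] [LinearOrder R]
    [IsStrictOrderedRing R] (u v : ι → R) : (u ⬝ᵥ v) ^ 2 ≤ (u ⬝ᵥ u) * (v ⬝ᵥ v) := by
  simpa only [dotProduct, sq] using Finset.sum_mul_sq_le_sq_mul_sq Finset.univ u v

lemma frob_self_nonneg (A : Matrix (Fin 3) (Fin 3) ℝ) : 0 ≤ frob A A :=
  Finset.sum_nonneg fun _ _ ↦ Finset.sum_nonneg fun _ _ ↦ mul_self_nonneg _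

lemma frob_vecMulVec_self (n : Fin 3 → ℝ) (D : Matrix (Fin 3) (Fin 3) ℝ) :
    frob (vecMulVec n n) D = n ⬝ᵥ (D *ᵥ n) := by
  simp only [frob, vecMulVec_apply, dotProduct, mulVec, Finset.mul_sum]
  exact Finset.sum_congr rfl fun _ _ ↦ Finset.sum_congr rfl fun _ _ ↦ by ring

/-- For a unit vector `n` this is the orthogonal projection onto `n⊥`; the factor `n ⬝ᵥ n`
in place of `1` makes `frob_planarPart_self` a polynomial identity in `n`. -/
def orthProj {ι : Type*} [Fintype ι] [DecidableEq ι] (n : ι → ℝ) : Matrix ι ι ℝ :=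
  (n ⬝ᵥ n) • 1 - vecMulVec n n

noncomputable def planarPart (D : Matrix (Fin 3) (Fin 3) ℝ) (n : Fin 3 → ℝ) :
    Matrix (Fin 3) (Fin 3) ℝ :=
  orthProj n * D * orthProj n + ((n ⬝ᵥ (D *ᵥ n)) / 2) • orthProj n

lemma frob_planarPart_self (D : Matrix (Fin 3) (Fin 3) ℝ) (hD : D.IsSymm) (n : Fin 3 → ℝ) :
    frob (planarPart D n) (planarPart D n) =
      (n ⬝ᵥ n) ^ 2 * ((n ⬝ᵥ n) ^ 2 * frob D D - 2 * (n ⬝ᵥ n) * ((D *ᵥ n) ⬝ᵥ (D *ᵥ n))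
        + (n ⬝ᵥ (D *ᵥ n)) ^ 2 / 2) + (n ⬝ᵥ (D *ᵥ n)) * (n ⬝ᵥ n) ^ 3 * D.trace := by
  have h10 := hD.apply 0 1
  have h20 := hD.apply 0 2
  have h21 := hD.apply 1 2
  simp only [planarPart, orthProj, frob, Fin.sum_univ_three, mul_apply, Matrix.add_apply,
    Matrix.smul_apply, Matrix.sub_apply, one_apply, vecMulVec_apply, mulVec, dotProduct,
    trace_fin_three, h10, h20, h21, Fin.reduceEq, ↓reduceIte, smul_eq_mul]
  ring

lemma two_mul_mulVec_dotProduct_self_le (D : Matrix (Fin 3) (Fin 3) ℝ) (hD : D.IsSymm)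
    (htr : D.trace = 0) (n : Fin 3 → ℝ) (hn : n ⬝ᵥ n = 1) :
    2 * ((D *ᵥ n) ⬝ᵥ (D *ᵥ n)) ≤ frob D D + (n ⬝ᵥ (D *ᵥ n)) ^ 2 / 2 := by
  have h := frob_planarPart_self D hD n
  rw [hn, htr] at h
  linarith [frob_self_nonneg (planarPart D n)]

noncomputable def dissipation (β₁ β₂ β₃ : ℝ) (D : Matrix (Fin 3) (Fin 3) ℝ) (n : Fin 3 → ℝ) :
    ℝ :=
  β₁ * (frob (vecMulVec n n) D) ^ 2 + β₂ * frob D D + β₃ * ((D *ᵥ n) ⬝ᵥ (D *ᵥ n))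

lemma dissipation_nonneg {β₁ β₂ β₃ : ℝ} (hβ₂ : 0 ≤ β₂) (hβ₂₃ : 0 ≤ 2 * β₂ + β₃)
    (hβ₁₂₃ : 0 ≤ 3 / 2 * β₂ + β₃ + β₁) (D : Matrix (Fin 3) (Fin 3) ℝ) (n : Fin 3 → ℝ)
    (hD : D.IsSymm) (htr : D.trace = 0) (hn : n ⬝ᵥ n = 1) : 0 ≤ dissipation β₁ β₂ β₃ D n := by
  have hplanar := two_mul_mulVec_dotProduct_self_le D hD htr n hn
  have hcs : (n ⬝ᵥ (D *ᵥ n)) ^ 2 ≤ (D *ᵥ n) ⬝ᵥ (D *ᵥ n) := by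
    simpa only [hn, one_mul] using dotProduct_sq_le_mul n (D *ᵥ n)
  set a := n ⬝ᵥ (D *ᵥ n)
  set v2 := (D *ᵥ n) ⬝ᵥ (D *ᵥ n)
  calc 0 ≤ β₂ * (frob D D + a ^ 2 / 2 - 2 * v2) + (2 * β₂ + β₃) * (v2 - a ^ 2)
        + (3 / 2 * β₂ + β₃ + β₁) * a ^ 2 :=
        add_nonneg (add_nonneg (mul_nonneg hβ₂ (by linarith)) (mul_nonneg hβ₂₃ (by linarith)))
          (mul_nonneg hβ₁₂₃ (sq_nonneg a))
    _ = dissipation β₁ β₂ β₃ D n := by rw [dissipation, frob_vecMulVec_self]; ring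

lemma coefficients_nonneg_of_dissipation_nonneg {β₁ β₂ β₃ : ℝ}
    (h : ∀ (D : Matrix (Fin 3) (Fin 3) ℝ) (n : Fin 3 → ℝ), D.IsSymm → D.trace = 0 →
      n ⬝ᵥ n = 1 → 0 ≤ dissipation β₁ β₂ β₃ D n) :
    0 ≤ β₂ ∧ 0 ≤ 2 * β₂ + β₃ ∧ 0 ≤ 3 / 2 * β₂ + β₃ + β₁ := by
  have e₃ : ![(0 : ℝ), 0, 1] ⬝ᵥ ![0, 0, 1] = 1 := by simp [dotProduct, Fin.sum_univ_succ]
  have h₂ := h !![0, 1, 0; 1, 0, 0; 0, 0, 0] ![0, 0, 1]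
    (by ext i j; fin_cases i <;> fin_cases j <;> rfl) (by rw [trace_fin_three_of]; norm_num) e₃
  have h₂₃ := h !![0, 0, 1; 0, 0, 0; 1, 0, 0] ![0, 0, 1]
    (by ext i j; fin_cases i <;> fin_cases j <;> rfl) (by rw [trace_fin_three_of]; norm_num) e₃
  have h₁₂₃ := h !![-1 / 2, 0, 0; 0, -1 / 2, 0; 0, 0, 1] ![0, 0, 1]
    (by ext i j; fin_cases i <;> fin_cases j <;> rfl) (by rw [trace_fin_three_of]; norm_num) e₃
  norm_num [dissipation, frob_vecMulVec_self, frob, Fin.sum_univ_succ, mulVec, dotProduct]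
    at h₂ h₂₃ h₁₂₃
  exact ⟨by linarith, by linarith, by linarith⟩

theorem dissipation_relation_characterization (β₁ β₂ β₃ : ℝ) :
    (∀ (D : Matrix (Fin 3) (Fin 3) ℝ) (n : Fin 3 → ℝ),
        Dᵀ = D → D.trace = 0 → n ⬝ᵥ n = 1 →
        0 ≤ β₁ * (frob (vecMulVec n n) D) ^ 2 + β₂ * frob D D
            + β₃ * ((D *ᵥ n) ⬝ᵥ (D *ᵥ n)))
    ↔ (0 ≤ β₂ ∧ 0 ≤ 2 * β₂ + β₃ ∧ 0 ≤ 3 / 2 * β₂ + β₃ + β₁) :=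
  ⟨coefficients_nonneg_of_dissipation_nonneg, fun ⟨hβ₂, hβ₂₃, hβ₁₂₃⟩ ↦
    dissipation_nonneg hβ₂ hβ₂₃ hβ₁₂₃⟩
end
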